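/- arXiv:1209.0047 — 2 statements merged into one kernel-verified Lean document; each statement's English description precedes it below -/
import Mathlib

section
/- (Case A.I.1, hybrid CSIT 1.) If N2 < M1 ≤ N1 ≤ M2, then Ph1 = Pi = {(d1,d2) ∈ ℝ² : d1 ≥ 0, 0 ≤ d2 ≤ N2, d1+d2 ≤ M1}. -/
open Set

noncomputable section

/-- Bound L01 : 0 ≤ d1 ≤ min(M1,N1). -/
def L01 (M1 N1 : ℕ) (d : ℝ × ℝ) : Prop := 0 ≤ d.1 ∧ d.1 ≤ min (M1 : ℝ) (N1 : ℝ)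

/-- Bound L02 : 0 ≤ d2 ≤ min(M2,N2). -/
def L02 (M2 N2 : ℕ) (d : ℝ × ℝ) : Prop := 0 ≤ d.2 ∧ d.2 ≤ min (M2 : ℝ) (N2 : ℝ)

/-- Bound L1 : d1/min(N1+N2,M1) + d2/min(N2,M1) ≤ min(N2,M1+M2)/min(N2,M1). -/
def L1 (M1 M2 N1 N2 : ℕ) (d : ℝ × ℝ) : Prop :=
  d.1 / min ((N1 : ℝ) + (N2 : ℝ)) (M1 : ℝ) + d.2 / min (N2 : ℝ) (M1 : ℝ) ≤
    min (N2 : ℝ) ((M1 : ℝ) + (M2 : ℝ)) / min (N2 : ℝ) (M1 : ℝ)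

/-- Bound L2 : d1/min(N1,M2) + d2/min(N1+N2,M2) ≤ min(N1,M1+M2)/min(N1,M2). -/
def L2 (M1 M2 N1 N2 : ℕ) (d : ℝ × ℝ) : Prop :=
  d.1 / min (N1 : ℝ) (M2 : ℝ) + d.2 / min ((N1 : ℝ) + (N2 : ℝ)) (M2 : ℝ) ≤
    min (N1 : ℝ) ((M1 : ℝ) + (M2 : ℝ)) / min (N1 : ℝ) (M2 : ℝ)

/-- Bound L3 : d1+d2 ≤ min(M1+M2, N1+N2, max(M1,N2), max(M2,N1)). -/
def L3 (M1 M2 N1 N2 : ℕ) (d : ℝ × ℝ) : Prop :=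
  d.1 + d.2 ≤
    min (min ((M1 : ℝ) + (M2 : ℝ)) ((N1 : ℝ) + (N2 : ℝ)))
      (min (max (M1 : ℝ) (N2 : ℝ)) (max (M2 : ℝ) (N1 : ℝ)))

/-- Bound L4 : d1 + d2·(N1+2N2−M2)/N2 ≤ N1+N2. -/
def L4 (M2 N1 N2 : ℕ) (d : ℝ × ℝ) : Prop :=
  d.1 + d.2 * (((N1 : ℝ) + 2 * (N2 : ℝ) - (M2 : ℝ)) / (N2 : ℝ)) ≤ (N1 : ℝ) + (N2 : ℝ)

/-- Bound L5 : d2 + d1·(N2+2N1−M1)/N1 ≤ N1+N2. -/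
def L5 (M1 N1 N2 : ℕ) (d : ℝ × ℝ) : Prop :=
  d.2 + d.1 * (((N2 : ℝ) + 2 * (N1 : ℝ) - (M1 : ℝ)) / (N1 : ℝ)) ≤ (N1 : ℝ) + (N2 : ℝ)

/-- Condition 1 : M1 > N1+N2−M2 > N1 > N2 > M2 > N2(N2−M2)/(N1−M2). -/
def Cond1 (M1 M2 N1 N2 : ℕ) : Prop :=
  (M1 : ℝ) > (N1 : ℝ) + (N2 : ℝ) - (M2 : ℝ) ∧
  (N1 : ℝ) + (N2 : ℝ) - (M2 : ℝ) > (N1 : ℝ) ∧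
  (N1 : ℝ) > (N2 : ℝ) ∧ (N2 : ℝ) > (M2 : ℝ) ∧
  (M2 : ℝ) > (N2 : ℝ) * ((N2 : ℝ) - (M2 : ℝ)) / ((N1 : ℝ) - (M2 : ℝ))

/-- Condition 2 : M2 > N1+N2−M1 > N2 > N1 > M1 > N1(N1−M1)/(N2−M1). -/
def Cond2 (M1 M2 N1 N2 : ℕ) : Prop :=
  (M2 : ℝ) > (N1 : ℝ) + (N2 : ℝ) - (M1 : ℝ) ∧
  (N1 : ℝ) + (N2 : ℝ) - (M1 : ℝ) > (N2 : ℝ) ∧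
  (N2 : ℝ) > (N1 : ℝ) ∧ (N1 : ℝ) > (M1 : ℝ) ∧
  (M1 : ℝ) > (N1 : ℝ) * ((N1 : ℝ) - (M1 : ℝ)) / ((N2 : ℝ) - (M1 : ℝ))

/-- DoF outer-bound region under perfect and instantaneous CSIT. -/
def Pinst (M1 M2 N1 N2 : ℕ) : Set (ℝ × ℝ) :=
  {d | L01 M1 N1 d ∧ L02 M2 N2 d ∧ L3 M1 M2 N1 N2 d}

/-- DoF outer-bound region under hybrid CSIT 1. -/
def Ph1 (M1 M2 N1 N2 : ℕ) : Set (ℝ × ℝ) :=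
  {d | L01 M1 N1 d ∧ L02 M2 N2 d ∧ L2 M1 M2 N1 N2 d ∧ L3 M1 M2 N1 N2 d ∧
    (Cond2 M1 M2 N1 N2 → L5 M1 N1 N2 d)}

/-- DoF outer-bound region under hybrid CSIT 2. -/
def Ph2 (M1 M2 N1 N2 : ℕ) : Set (ℝ × ℝ) :=
  {d | L01 M1 N1 d ∧ L02 M2 N2 d ∧ L1 M1 M2 N1 N2 d ∧ L3 M1 M2 N1 N2 d ∧
    (Cond1 M1 M2 N1 N2 → L4 M2 N1 N2 d)}

/-- DoF outer-bound region under delayed CSIT. -/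
def Pd (M1 M2 N1 N2 : ℕ) : Set (ℝ × ℝ) :=
  {d | L01 M1 N1 d ∧ L02 M2 N2 d ∧ L1 M1 M2 N1 N2 d ∧ L2 M1 M2 N1 N2 d ∧
    L3 M1 M2 N1 N2 d ∧ (Cond1 M1 M2 N1 N2 → L4 M2 N1 N2 d) ∧
    (Cond2 M1 M2 N1 N2 → L5 M1 N1 N2 d)}

/-!
Under N2 ≤ M1 ≤ N1 ≤ M2 the sum bound L3 collapses to d1 + d2 ≤ M1. Since M1 ≤ N1 ≤ M2, this
already forces L2 (whose denominators are then N1 and something at least N1), and Condition 2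
cannot hold, as it would need N2 > N1 > M1.
-/

section

variable {M1 M2 N1 N2 : ℕ} {d : ℝ × ℝ}

theorem L3.add_le_max (h : L3 M1 M2 N1 N2 d) : d.1 + d.2 ≤ max (M1 : ℝ) N2 :=
  h.trans <| (min_le_right _ _).trans (min_le_left _ _)

theorem L3_iff_add_le (hN2M1 : N2 ≤ M1) (hM1N1 : M1 ≤ N1) (hN1M2 : N1 ≤ M2) :
    L3 M1 M2 N1 N2 d ↔ d.1 + d.2 ≤ M1 := by
  have hN2M1' : (N2 : ℝ) ≤ M1 := by exact_mod_cast hN2M1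
  have hM1N1' : (M1 : ℝ) ≤ N1 := by exact_mod_cast hM1N1
  have hN1M2' : (N1 : ℝ) ≤ M2 := by exact_mod_cast hN1M2
  have hM1 : max (M1 : ℝ) N2 = M1 := max_eq_left hN2M1'
  constructor
  · intro h
    simpa only [hM1] using h.add_le_max
  · intro h
    unfold L3
    rw [hM1, max_eq_left hN1M2']
    refine le_min (le_min ?_ ?_) (le_min h ?_) <;> linarith [N2.cast_nonneg (α := ℝ)]

theorem not_cond2_of_le (h : N2 ≤ M1) : ¬ Cond2 M1 M2 N1 N2 := fun hc =>
  (by exact_mod_cast h : (N2 : ℝ) ≤ M1).not_gt (hc.2.2.2.1.trans hc.2.2.1)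

theorem L2_of_add_le (hN1 : 0 < N1) (hN1M2 : N1 ≤ M2) (hd2 : 0 ≤ d.2)
    (hd : d.1 + d.2 ≤ N1) : L2 M1 M2 N1 N2 d := by
  have hN1' : (0 : ℝ) < N1 := by exact_mod_cast hN1
  have hN1M2' : (N1 : ℝ) ≤ M2 := by exact_mod_cast hN1M2
  have hmin : (N1 : ℝ) ≤ min ((N1 : ℝ) + N2) M2 :=
    le_min (le_add_of_nonneg_right N2.cast_nonneg) hN1M2'
  unfold L2
  rw [min_eq_left (a := (N1 : ℝ)) hN1M2',
    min_eq_left (a := (N1 : ℝ)) (by linarith [M1.cast_nonneg (α := ℝ)]), div_self hN1'.ne']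
  calc d.1 / N1 + d.2 / min ((N1 : ℝ) + N2) M2
      ≤ d.1 / N1 + d.2 / N1 := by gcongr
    _ = (d.1 + d.2) / N1 := by rw [add_div]
    _ ≤ 1 := (div_le_one hN1').mpr hd

theorem Ph1_eq_Pinst (hN1 : 0 < N1) (hN2M1 : N2 ≤ M1) (hM1N1 : M1 ≤ N1) (hN1M2 : N1 ≤ M2) :
    Ph1 M1 M2 N1 N2 = Pinst M1 M2 N1 N2 := by
  ext d
  constructor
  · rintro ⟨h01, h02, -, h3, -⟩
    exact ⟨h01, h02, h3⟩
  · rintro ⟨h01, h02, h3⟩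
    have hsum : d.1 + d.2 ≤ N1 :=
      h3.add_le_max.trans (max_le (by exact_mod_cast hM1N1) (by exact_mod_cast hN2M1.trans hM1N1))
    exact ⟨h01, h02, L2_of_add_le hN1 hN1M2 h02.1 hsum, h3,
      fun hc => absurd hc (not_cond2_of_le hN2M1)⟩

theorem Pinst_eq (hN2M1 : N2 ≤ M1) (hM1N1 : M1 ≤ N1) (hN1M2 : N1 ≤ M2) :
    Pinst M1 M2 N1 N2 =
      {d : ℝ × ℝ | 0 ≤ d.1 ∧ 0 ≤ d.2 ∧ d.2 ≤ (N2 : ℝ) ∧ d.1 + d.2 ≤ (M1 : ℝ)} := by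
  have hN2M1' : (N2 : ℝ) ≤ M1 := by exact_mod_cast hN2M1
  have hM1N1' : (M1 : ℝ) ≤ N1 := by exact_mod_cast hM1N1
  have hN1M2' : (N1 : ℝ) ≤ M2 := by exact_mod_cast hN1M2
  ext d
  simp only [Pinst, L01, L02, L3_iff_add_le hN2M1 hM1N1 hN1M2, mem_ofPred_eq,
    min_eq_left hM1N1', min_eq_right (hN2M1'.trans (hM1N1'.trans hN1M2'))]
  constructor
  · rintro ⟨⟨h1, -⟩, ⟨h2, h2'⟩, h⟩
    exact ⟨h1, h2, h2', h⟩
  · rintro ⟨h1, h2, h2', h⟩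
    exact ⟨⟨h1, by linarith⟩, ⟨h2, h2'⟩, h⟩

end

theorem caseAI1_h1_general (M1 M2 N1 N2 : ℕ)
    (h1 : N2 < M1) (h2 : M1 ≤ N1) (h3 : N1 ≤ M2) :
    Ph1 M1 M2 N1 N2 = Pinst M1 M2 N1 N2 ∧
    Pinst M1 M2 N1 N2 =
      {d : ℝ × ℝ | 0 ≤ d.1 ∧ 0 ≤ d.2 ∧ d.2 ≤ (N2 : ℝ) ∧ d.1 + d.2 ≤ (M1 : ℝ)} :=
  ⟨Ph1_eq_Pinst (by omega) h1.le h2 h3, Pinst_eq h1.le h2 h3⟩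

/-- Case A.I.1, hybrid CSIT 1: if N2 < M1 ≤ N1 ≤ M2, then
Ph1 = Pi = {(d1,d2) : d1 ≥ 0, 0 ≤ d2 ≤ N2, d1+d2 ≤ M1}. -/
theorem caseAI1_h1 (M1 M2 N1 N2 : ℕ)
    (hM1 : 0 < M1) (hM2 : 0 < M2) (hN1 : 0 < N1) (hN2 : 0 < N2)
    (h1 : N2 < M1) (h2 : M1 ≤ N1) (h3 : N1 ≤ M2) :
    Ph1 M1 M2 N1 N2 = Pinst M1 M2 N1 N2 ∧
    Pinst M1 M2 N1 N2 =
      {d : ℝ × ℝ | 0 ≤ d.1 ∧ 0 ≤ d.2 ∧ d.2 ≤ (N2 : ℝ) ∧ d.1 + d.2 ≤ (M1 : ℝ)} :=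
  caseAI1_h1_general M1 M2 N1 N2 h1 h2 h3
end
end

section
/- (Case A.I.3b, hybrid CSIT 2, Case III.) If M1 > M2 > N1 ≥ N2 ≥ 1, M1 ≤ N1+N2, and N2(M1−N1) > M1(M2−N1), then Ph2 = {(d1,d2) ∈ ℝ² : 0 ≤ d1 ≤ N1, d2 ≥ 0, d1/M1 + d2/N2 ≤ 1, d1+d2 ≤ M2}; moreover the point Q = (M1(M2−N2)/(M1−N2), N2(M1−M2)/(M1−N2)) satisfies Q1/M1 + Q2/N2 = 1 and Q1 + Q2 = M2, and 0 < M1(M2−N2)/(M1−N2) < N1, so that both of these constraints are active at Q. -/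
open Set

noncomputable section

/-! Under these inequalities every `min` and `max` in L01, L02, L1 and L3 resolves, so that L1
becomes `d1/M1 + d2/N2 ≤ 1` and L3 becomes `d1 + d2 ≤ M2`; Condition 1 fails because `N2 < M2`,
and the bound `d2 ≤ N2` of L02 is implied by L1. The point Q is where the two lines
`x/M1 + y/N2 = 1` and `x + y = M2` meet, and `Q1 < N1` is `N2(M1−N1) > M1(M2−N1)` rearranged. -/

section Constraints

variable {M1 M2 N1 N2 : ℕ} {d : ℝ × ℝ}

theorem L01_iff_of_le (h : N1 ≤ M1) : L01 M1 N1 d ↔ 0 ≤ d.1 ∧ d.1 ≤ N1 := by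
  rw [L01, min_eq_right (by exact_mod_cast h)]

theorem L02_iff_of_le (h : N2 ≤ M2) : L02 M2 N2 d ↔ 0 ≤ d.2 ∧ d.2 ≤ N2 := by
  rw [L02, min_eq_right (by exact_mod_cast h)]

theorem L1_iff_of_le (hN2 : 0 < N2) (hN2M1 : N2 ≤ M1) (hM1 : M1 ≤ N1 + N2) :
    L1 M1 M2 N1 N2 d ↔ d.1 / M1 + d.2 / N2 ≤ 1 := by
  have hN2M1' : (N2 : ℝ) ≤ M1 := by exact_mod_cast hN2M1
  have hM1' : (M1 : ℝ) ≤ N1 + N2 := by exact_mod_cast hM1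
  rw [L1, min_eq_right hM1', min_eq_left hN2M1', min_eq_left (by linarith [M2.cast_nonneg (α := ℝ)]),
    div_self (by positivity)]

theorem L3_iff_of_le (hN1 : N1 ≤ M2) (hN2 : N2 ≤ M1) (hM2 : M2 ≤ M1) (hM1 : M1 ≤ N1 + N2) :
    L3 M1 M2 N1 N2 d ↔ d.1 + d.2 ≤ M2 := by
  have hN1' : (N1 : ℝ) ≤ M2 := by exact_mod_cast hN1
  have hN2' : (N2 : ℝ) ≤ M1 := by exact_mod_cast hN2
  have hM2' : (M2 : ℝ) ≤ M1 := by exact_mod_cast hM2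
  have hM1' : (M1 : ℝ) ≤ N1 + N2 := by exact_mod_cast hM1
  rw [L3, max_eq_left hN2', max_eq_left hN1', min_eq_right hM2',
    min_eq_right (by linarith : (N1 : ℝ) + N2 ≤ M1 + M2), min_eq_right (by linarith)]

theorem not_cond1_of_le (h : N2 ≤ M2) : ¬ Cond1 M1 M2 N1 N2 := fun hc =>
  not_lt.2 (by exact_mod_cast h) hc.2.2.2.1

end Constraints

theorem le_of_div_add_div_le_one {x y a b : ℝ} (hx : 0 ≤ x) (ha : 0 ≤ a) (hb : 0 < b)
    (h : x / a + y / b ≤ 1) : y ≤ b := by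
  have : y / b ≤ 1 := by linarith [div_nonneg hx ha]
  rwa [div_le_one hb] at this

theorem Ph2_eq_of_le {M1 M2 N1 N2 : ℕ} (hM : M2 < M1) (hN1 : N1 < M2) (hN : N2 ≤ N1)
    (hN2 : 0 < N2) (hM1 : M1 ≤ N1 + N2) :
    Ph2 M1 M2 N1 N2 = {d : ℝ × ℝ | 0 ≤ d.1 ∧ d.1 ≤ N1 ∧ 0 ≤ d.2 ∧
      d.1 / M1 + d.2 / N2 ≤ 1 ∧ d.1 + d.2 ≤ M2} := by
  ext d
  simp only [Ph2, Set.mem_ofPred_eq, L01_iff_of_le (by omega : N1 ≤ M1),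
    L02_iff_of_le (by omega : N2 ≤ M2), L1_iff_of_le hN2 (by omega : N2 ≤ M1) hM1,
    L3_iff_of_le hN1.le (by omega) hM.le hM1, not_cond1_of_le (by omega : N2 ≤ M2),
    false_imp_iff, and_true]
  constructor
  · rintro ⟨⟨hd1, hd1N1⟩, ⟨hd2, -⟩, hL1, hL3⟩
    exact ⟨hd1, hd1N1, hd2, hL1, hL3⟩
  · rintro ⟨hd1, hd1N1, hd2, hL1, hL3⟩
    exact ⟨⟨hd1, hd1N1⟩, ⟨hd2, le_of_div_add_div_le_one hd1 (by positivity) (by positivity) hL1⟩,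
      hL1, hL3⟩

section LineIntersection

variable {a b c : ℝ}

theorem line_intersection_div_add_div (ha : a ≠ 0) (hb : b ≠ 0) (hab : a - b ≠ 0) :
    a * (c - b) / (a - b) / a + b * (a - c) / (a - b) / b = 1 := by
  field_simp
  ring

theorem line_intersection_add (hab : a - b ≠ 0) :
    a * (c - b) / (a - b) + b * (a - c) / (a - b) = c := by
  rw [← add_div, div_eq_iff hab]
  ring

theorem line_intersection_fst_lt_iff (hab : b < a) {n : ℝ} :
    a * (c - b) / (a - b) < n ↔ a * (c - n) < b * (a - n) := by
  rw [div_lt_iff₀ (sub_pos.2 hab)]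
  constructor <;> intro h <;> linarith

end LineIntersection

/-- Case A.I.3b, hybrid CSIT 2, Case III: if M1 > M2 > N1 ≥ N2 ≥ 1, M1 ≤ N1+N2 and
N2(M1−N1) > M1(M2−N1), then Ph2 = {(d1,d2) : 0 ≤ d1 ≤ N1, d2 ≥ 0, d1/M1 + d2/N2 ≤ 1,
d1+d2 ≤ M2}; moreover the corner point Q = (M1(M2−N2)/(M1−N2), N2(M1−M2)/(M1−N2))
satisfies Q1/M1 + Q2/N2 = 1, Q1 + Q2 = M2 and 0 < Q1 < N1. -/
theorem caseAI3b_h2_III (M1 M2 N1 N2 : ℕ)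
    (h1 : M1 > M2) (h2 : M2 > N1) (h3 : N1 ≥ N2) (h4 : 1 ≤ N2) (h5 : M1 ≤ N1 + N2)
    (h6 : (N2 : ℝ) * ((M1 : ℝ) - (N1 : ℝ)) > (M1 : ℝ) * ((M2 : ℝ) - (N1 : ℝ))) :
    Ph2 M1 M2 N1 N2 =
      {d : ℝ × ℝ | 0 ≤ d.1 ∧ d.1 ≤ (N1 : ℝ) ∧ 0 ≤ d.2 ∧
        d.1 / (M1 : ℝ) + d.2 / (N2 : ℝ) ≤ 1 ∧ d.1 + d.2 ≤ (M2 : ℝ)} ∧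
    ((M1 : ℝ) * ((M2 : ℝ) - (N2 : ℝ)) / ((M1 : ℝ) - (N2 : ℝ))) / (M1 : ℝ) +
      ((N2 : ℝ) * ((M1 : ℝ) - (M2 : ℝ)) / ((M1 : ℝ) - (N2 : ℝ))) / (N2 : ℝ) = 1 ∧
    (M1 : ℝ) * ((M2 : ℝ) - (N2 : ℝ)) / ((M1 : ℝ) - (N2 : ℝ)) +
      (N2 : ℝ) * ((M1 : ℝ) - (M2 : ℝ)) / ((M1 : ℝ) - (N2 : ℝ)) = (M2 : ℝ) ∧
    0 < (M1 : ℝ) * ((M2 : ℝ) - (N2 : ℝ)) / ((M1 : ℝ) - (N2 : ℝ)) ∧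
    (M1 : ℝ) * ((M2 : ℝ) - (N2 : ℝ)) / ((M1 : ℝ) - (N2 : ℝ)) < (N1 : ℝ) := by
  have hN2M2 : (N2 : ℝ) < M2 := by exact_mod_cast (by omega : N2 < M2)
  have hN2M1 : (N2 : ℝ) < M1 := by exact_mod_cast (by omega : N2 < M1)
  have hN2 : (0 : ℝ) < N2 := by exact_mod_cast h4
  have hM1 : (0 : ℝ) < M1 := hN2.trans hN2M1
  have hM1N2 : (M1 : ℝ) - N2 ≠ 0 := (sub_pos.2 hN2M1).ne'
  refine ⟨Ph2_eq_of_le h1 h2 h3 h4 h5, line_intersection_div_add_div hM1.ne' hN2.ne' hM1N2,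
    line_intersection_add hM1N2, ?_, (line_intersection_fst_lt_iff hN2M1).2 (by linarith)⟩
  exact div_pos (mul_pos hM1 (sub_pos.2 hN2M2)) (sub_pos.2 hN2M1)
end
end
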